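/- Let k = k_X(P,I,≺,N,U) be a skeleton, Υ = (Θ,→) a bundle that is a run of the protocol of k, and α a variable assignment such that the interpretation I(Υ) satisfies the skeleton formula Φ of K_Υ(k) = (Y,Φ) with α. Define φ(s) = α(z_s) for each strand s of k and σ(x) = α(x) for each algebra variable x ∈ X. Then (φ,σ) is a homomorphism from k into Υ. -/

import Mathlib

/-- The four sorts of the Simple Crypto Algebra signature. -/
inductive MSort : Type
  | top | A | S | D
deriving DecidableEq

/-- Message terms over a set `V` of variables (the free order-sorted algebra
in canonical form; ground messages are `MTerm Empty`). -/
inductive MTerm (V : Type) : Type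
  | var (v : V)
  | akey (i : ℕ) (b : Bool)   -- asymmetric key constants: `a_i` when `b = false`, `b_i` when `b = true`
  | skey (i : ℕ)              -- symmetric key constants `s_i`
  | data (i : ℕ)              -- data constants
  | invk (t : MTerm V)        -- key inverse (kept only where it cannot be reduced)
  | pair (t₀ t₁ : MTerm V)
  | enc (t k : MTerm V)

namespace MTerm

/-- The sort of a term (`none` when ill-sorted), given variable sorts `so`. -/
def srt {V : Type} (so : V → MSort) : MTerm V → Option MSort
  | var v => some (so v)
  | akey _ _ => some .A
  | skey _ => some .S
  | data _ => some .D
  | invk t => match t.srt so with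
      | some .A => some .A
      | some .S => some .S
      | _ => none
  | pair t₀ t₁ => match t₀.srt so, t₁.srt so with
      | some _, some _ => some .top
      | _, _ => none
  | enc t k => match t.srt so, k.srt so with
      | some _, some .A => some .top
      | some _, some .S => some .top
      | _, _ => none

/-- The key-inverse operation on canonical terms. -/
def invOp {V : Type} (so : V → MSort) : MTerm V → MTerm V
  | var v => if so v = .S then var v else invk (var v)
  | akey i b => akey i (!b)
  | skey i => skey i
  | invk t => t
  | t => invk t

/-- Apply a substitution (an algebra homomorphism determined by its action on
variables), normalizing inverses; `so'` gives the sorts of target variables. -/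
def subst {V W : Type} (so' : W → MSort) (σ : V → MTerm W) : MTerm V → MTerm W
  | var v => σ v
  | akey i b => akey i b
  | skey i => skey i
  | data i => data i
  | invk t => invOp so' (t.subst so' σ)
  | pair t₀ t₁ => pair (t₀.subst so' σ) (t₁.subst so' σ)
  | enc t k => enc (t.subst so' σ) (k.subst so' σ)

end MTerm

/-- Subsort relation: every sort is ≤ itself and ≤ ⊤. -/
def SLe (s₁ s₂ : MSort) : Prop := s₁ = s₂ ∨ s₂ = .top

/-- `t` is a message of sort `s` (up to subsorting). -/
def HasSort {V : Type} (so : V → MSort) (t : MTerm V) (s : MSort) : Prop :=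
  ∃ s', t.srt so = some s' ∧ SLe s' s

def WellSorted {V : Type} (so : V → MSort) (t : MTerm V) : Prop :=
  (t.srt so).isSome = true

/-- Atoms are the messages of sort A, S or D. -/
def IsAtomM {V : Type} (so : V → MSort) (t : MTerm V) : Prop :=
  t.srt so = some .A ∨ t.srt so = some .S ∨ t.srt so = some .D

/-- Sorting of ground (variable-free) terms. -/
def gSo : Empty → MSort := fun e => nomatch e

/-- Ground messages: the initial algebra. -/
abbrev Msg := MTerm Empty

/-- The carried-by relation `t₀ ⊑ t₁`. -/
inductive Carries {V : Type} : MTerm V → MTerm V → Prop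
  | refl (t) : Carries t t
  | pairL {t t₀ t₁} : Carries t t₀ → Carries t (.pair t₀ t₁)
  | pairR {t t₀ t₁} : Carries t t₁ → Carries t (.pair t₀ t₁)
  | encP {t t₀ k} : Carries t t₀ → Carries t (.enc t₀ k)
/-- Events: transmission `+t` or reception `−t`. -/
inductive EvtT (V : Type) : Type
  | send (t : MTerm V)
  | recv (t : MTerm V)

namespace EvtT

def msg {V : Type} : EvtT V → MTerm V
  | send t => t
  | recv t => t

def IsSend {V : Type} : EvtT V → Prop
  | send _ => True
  | recv _ => False

def IsRecv {V : Type} : EvtT V → Prop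
  | send _ => False
  | recv _ => True

def subst {V W : Type} (so' : W → MSort) (σ : V → MTerm W) : EvtT V → EvtT W
  | send t => send (t.subst so' σ)
  | recv t => recv (t.subst so' σ)

end EvtT

/-- A default event (used only for out-of-range indexing). -/
def dEvt {V : Type} : EvtT V := .send (.data 0)

/-- A strand space: a finite non-empty sequence of traces (finite non-empty
sequences of events); strands are indices into the sequence. -/
structure SSpaceT (V : Type) where
  tr : List (List (EvtT V))
  nonnil : tr ≠ []
  ne : ∀ C ∈ tr, C ≠ []

namespace SSpaceT

variable {V : Type}

/-- The trace of strand `s`. -/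
def trace (Θ : SSpaceT V) (s : ℕ) : List (EvtT V) := Θ.tr.getD s []

/-- `s` is a strand of `Θ`, i.e. a member of `Dom(Θ)`. -/
def IsStrand (Θ : SSpaceT V) (s : ℕ) : Prop := s < Θ.tr.length

/-- `n = (s, i)` is a node of `Θ`. -/
def IsNode (Θ : SSpaceT V) (n : ℕ × ℕ) : Prop :=
  n.1 < Θ.tr.length ∧ n.2 < (Θ.trace n.1).length

/-- The event at node `n`. -/
def evt (Θ : SSpaceT V) (n : ℕ × ℕ) : EvtT V := (Θ.trace n.1).getD n.2 dEvt

end SSpaceT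

/-- `t` originates in trace `C` at index `i`. -/
def OrigAt {V : Type} (C : List (EvtT V)) (t : MTerm V) (i : ℕ) : Prop :=
  i < C.length ∧ (C.getD i dEvt).IsSend ∧ Carries t (C.getD i dEvt).msg ∧
    ∀ j < i, ¬ Carries t (C.getD j dEvt).msg

/-- `t` is non-originating in `Θ`. -/
def SSpaceT.Non {V : Type} (Θ : SSpaceT V) (t : MTerm V) : Prop :=
  ∀ s, Θ.IsStrand s → ∀ i, ¬ OrigAt (Θ.trace s) t i

/-- `t` uniquely originates in `Θ` at node `n`. -/
def SSpaceT.Uniq {V : Type} (Θ : SSpaceT V) (t : MTerm V) (n : ℕ × ℕ) : Prop :=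
  Θ.IsStrand n.1 ∧ OrigAt (Θ.trace n.1) t n.2 ∧
    ∀ s i, Θ.IsStrand s → OrigAt (Θ.trace s) t i → s = n.1 ∧ i = n.2

/-- Strand succession edges `(s, i) ⇒ (s, i+1)`. -/
def SuccEdge {V : Type} (Θ : SSpaceT V) (n₀ n₁ : ℕ × ℕ) : Prop :=
  n₀.1 = n₁.1 ∧ n₁.2 = n₀.2 + 1 ∧ Θ.IsNode n₁

/-- A bundle: a ground strand space together with communication edges forming,
with the strand-succession edges, a finite directed acyclic graph in which
every reception has a unique matching transmission. -/
structure Bundle where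
  Θ : SSpaceT Empty
  comm : (ℕ × ℕ) → (ℕ × ℕ) → Prop
  comm_nodes : ∀ n₀ n₁, comm n₀ n₁ → Θ.IsNode n₀ ∧ Θ.IsNode n₁
  comm_evt : ∀ n₀ n₁, comm n₀ n₁ → ∃ t, Θ.evt n₀ = .send t ∧ Θ.evt n₁ = .recv t
  comm_uniq : ∀ n₁, Θ.IsNode n₁ → (Θ.evt n₁).IsRecv → ∃! n₀, comm n₀ n₁
  acyclic : ∀ n, ¬ Relation.TransGen (fun m₀ m₁ => SuccEdge Θ m₀ m₁ ∨ comm m₀ m₁) n n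

/-- The edge relation of a bundle. -/
def Bundle.edge (Υ : Bundle) (n₀ n₁ : ℕ × ℕ) : Prop :=
  SuccEdge Υ.Θ n₀ n₁ ∨ Υ.comm n₀ n₁

/-- The precedes relation `≺` of a bundle: the transitive closure of the edges. -/
def Bundle.prec (Υ : Bundle) : (ℕ × ℕ) → (ℕ × ℕ) → Prop :=
  Relation.TransGen Υ.edge
/-- A role item `r(C, N, U)`: a trace together with non-origination and
unique-origination assumption sequences of the same length. -/
structure RoleItemT (V : Type) where
  C : List (EvtT V)
  N : List (Set (MTerm V))
  U : List (Set (MTerm V))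
  ne : C ≠ []
  lenN : N.length = C.length
  lenU : U.length = C.length

/-- Apply a substitution to a role item. -/
def RoleItemT.subst {V W : Type} (so' : W → MSort) (σ : V → MTerm W)
    (r : RoleItemT V) : RoleItemT W where
  C := r.C.map (EvtT.subst so' σ)
  N := r.N.map (fun X => (MTerm.subst so' σ) '' X)
  U := r.U.map (fun X => (MTerm.subst so' σ) '' X)
  ne := by
    intro h
    have hl : r.C.length = 0 := by simpa using congrArg List.length h
    exact r.ne (List.length_eq_zero_iff.mp hl)
  lenN := by simpa using r.lenN
  lenU := by simpa using r.lenU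

/-- Strand `s` is an instance of role item `r` in `Θ`. -/
def InstOf {V : Type} (Θ : SSpaceT V) (s : ℕ) (r : RoleItemT V) : Prop :=
  Θ.IsStrand s ∧
  (Θ.trace s).length ≤ r.C.length ∧
  r.C.take (Θ.trace s).length = Θ.trace s ∧
  (∀ i < (Θ.trace s).length, ∀ t ∈ r.N.getD i ∅, Θ.Non t) ∧
  (∀ i < (Θ.trace s).length, ∀ t ∈ r.U.getD i ∅, Θ.Uniq t (s, i))

/-- `htin(Θ, z, h, r)`: strand `z` has height at least `h` and instantiates `r`. -/
def Htin {V : Type} (Θ : SSpaceT V) (z h : ℕ) (r : RoleItemT V) : Prop :=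
  h ≤ (Θ.trace z).length ∧ InstOf Θ z r

/-- A bundle is a run of the protocol `P` (a set of roles, i.e. of sets of
ground role items) when some role assignment makes each strand an instance of
a role item of its assigned role. -/
def RunOf (Υ : Bundle) (P : Set (Set (RoleItemT Empty))) : Prop :=
  ∃ rl : ℕ → Set (RoleItemT Empty),
    ∀ s, Υ.Θ.IsStrand s → rl s ∈ P ∧ ∃ r ∈ rl s, InstOf Υ.Θ s r
/-- A role template: a role item over variables `ℕ` with a sort assignment;
it inspires the role consisting of all its substitution instances. -/
structure RoleTemplate where
  so : ℕ → MSort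
  item : RoleItemT ℕ

/-- A substitution is sort-respecting when each variable is sent to a
well-sorted term whose sort is ≤ the variable's sort. -/
def Respects {V W : Type} (so : V → MSort) (so' : W → MSort) (σ : V → MTerm W) : Prop :=
  ∀ v, ∃ s, (σ v).srt so' = some s ∧ SLe s (so v)

/-- The (ground) role inspired by a template: all its ground instances. -/
def RoleTemplate.ground (tp : RoleTemplate) : Set (RoleItemT Empty) :=
  { r | ∃ σ : ℕ → Msg, Respects tp.so gSo σ ∧ r = tp.item.subst gSo σ }

/-- The ground protocol `pt(k)` induced by a protocol in template form. -/
def GroundProt (P : Set RoleTemplate) : Set (Set (RoleItemT Empty)) :=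
  { R | ∃ tp ∈ P, R = tp.ground }

/-- An instance `i(r, h, σ)` of a skeleton: a role (template), a height, and a
substitution into the skeleton's free algebra. -/
structure SkelInstance where
  tp : RoleTemplate
  height : ℕ
  σ : ℕ → MTerm ℕ

/-- A skeleton `k_X(P, I, ≺, N, U)` over the free algebra with variables `ℕ`
sorted by `soX`. -/
structure Skeleton where
  P : Set RoleTemplate
  soX : ℕ → MSort
  I : List SkelInstance
  sprec : (ℕ × ℕ) → (ℕ × ℕ) → Prop
  N : Set (MTerm ℕ)
  U : Set (MTerm ℕ)
  Ine : I ≠ []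
  mem_tp : ∀ ins ∈ I, ins.tp ∈ P
  hpos : ∀ ins ∈ I, 1 ≤ ins.height ∧ ins.height ≤ ins.tp.item.C.length
  σ_resp : ∀ ins ∈ I, Respects ins.tp.so soX ins.σ
  sprec_irrefl : ∀ n, ¬ sprec n n
  sprec_trans : ∀ n₀ n₁ n₂, sprec n₀ n₁ → sprec n₁ n₂ → sprec n₀ n₂
  N_atom : ∀ t ∈ N, IsAtomM soX t
  U_atom : ∀ t ∈ U, IsAtomM soX t

/-- The strand space of a skeleton: strand `s` has the trace obtained by
instantiating the length-`h` prefix of its role's trace. -/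
def Skeleton.space (k : Skeleton) : SSpaceT ℕ where
  tr := k.I.map (fun ins => (ins.tp.item.C.take ins.height).map (EvtT.subst k.soX ins.σ))
  nonnil := by
    intro h
    have hl : k.I.length = 0 := by simpa using congrArg List.length h
    exact k.Ine (List.length_eq_zero_iff.mp hl)
  ne := by
    intro C hC hnil
    rcases List.mem_map.mp hC with ⟨ins, hins, rfl⟩
    have h1 := (k.hpos ins hins).1
    have h2 := (k.hpos ins hins).2
    have hlen : ((ins.tp.item.C.take ins.height).map (EvtT.subst k.soX ins.σ)).length = 0 := by
      rw [hnil]; rfl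
    rw [List.length_map, List.length_take] at hlen
    omega

/-- `t` originates in the skeleton `k` at node `n` (the relation determining
`O_k(t)`). -/
def Skeleton.OrigNode (k : Skeleton) (t : MTerm ℕ) (n : ℕ × ℕ) : Prop :=
  k.space.IsStrand n.1 ∧ OrigAt (k.space.trace n.1) t n.2

/-- A homomorphism `δ = (φ, σ)` from a skeleton `k` into a bundle `Υ`. -/
structure BHom (k : Skeleton) (Υ : Bundle) where
  φ : ℕ → ℕ
  σ : ℕ → Msg
  resp : Respects k.soX gSo σ
  strands : ∀ s, k.space.IsStrand s → Υ.Θ.IsStrand (φ s)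
  node_map : ∀ n, k.space.IsNode n → Υ.Θ.IsNode (φ n.1, n.2)
  evt_map : ∀ n, k.space.IsNode n → (k.space.evt n).subst gSo σ = Υ.Θ.evt (φ n.1, n.2)
  ord : ∀ n₀ n₁, k.sprec n₀ n₁ → Υ.prec (φ n₀.1, n₀.2) (φ n₁.1, n₁.2)
  non : ∀ t ∈ k.N, Υ.Θ.Non (t.subst gSo σ)
  uniq : ∀ t ∈ k.U, ∀ n, k.OrigNode t n → Υ.Θ.Uniq (t.subst gSo σ) (φ n.1, n.2)
  run : RunOf Υ (GroundProt k.P)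

/-- A variable assignment is admissible when strand variables range over the
strands of the bundle and algebra variables take values of their sorts. -/
def AssignOK (Υ : Bundle) (k : Skeleton) (αz : ℕ → ℕ) (αx : ℕ → Msg) : Prop :=
  (∀ s, s < k.I.length → Υ.Θ.IsStrand (αz s)) ∧ Respects k.soX gSo αx

/-- The interpretation `I(Υ)` satisfies the skeleton formula `Φ` of
`K_Υ(k) = (X, Φ)` with the variable assignment `(αz, αx)`. -/
def SatSkel (Υ : Bundle) (k : Skeleton) (αz : ℕ → ℕ) (αx : ℕ → Msg) : Prop :=
  (∀ (s : ℕ) (hs : s < k.I.length),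
      Htin Υ.Θ (αz s) (k.I.get ⟨s, hs⟩).height
        (((k.I.get ⟨s, hs⟩).tp.item.subst k.soX (k.I.get ⟨s, hs⟩).σ).subst gSo αx)) ∧
  (∀ n₀ n₁, k.sprec n₀ n₁ → Υ.prec (αz n₀.1, n₀.2) (αz n₁.1, n₁.2)) ∧
  (∀ t ∈ k.N, Υ.Θ.Non (t.subst gSo αx)) ∧
  (∀ t ∈ k.U, ∀ n, k.OrigNode t n → Υ.Θ.Uniq (t.subst gSo αx) (αz n.1, n.2))

/-! The conjuncts of the skeleton formula are, read through `α`, the homomorphism conditions on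
orderings, non-origination and unique origination. The event condition comes from the `htin`
conjuncts: strand `α(z_s)` is at least `h` long and has the `α`-instance of the role trace as a
prefix, while strand `s` of `k` is the length-`h` prefix of the same role trace before applying `α`. -/

section

variable {V W : Type}

theorem EvtT.subst_dEvt (so' : W → MSort) (σ : V → MTerm W) :
    (dEvt : EvtT V).subst so' σ = dEvt :=
  rfl

theorem RoleItemT.getD_subst_C (so' : W → MSort) (σ : V → MTerm W) (r : RoleItemT V) (i : ℕ) :
    (r.subst so' σ).C.getD i dEvt = (r.C.getD i dEvt).subst so' σ :=
  List.getD_map r.C dEvt (EvtT.subst so' σ)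

theorem InstOf.evt_eq {Θ : SSpaceT V} {z : ℕ} {r : RoleItemT V} (h : InstOf Θ z r) {i : ℕ}
    (hi : i < (Θ.trace z).length) : Θ.evt (z, i) = r.C.getD i dEvt := by
  rw [SSpaceT.evt, ← h.2.2.1, List.getD_eq_getElem?_getD, List.getElem?_take_of_lt hi,
    List.getD_eq_getElem?_getD]

end

namespace Skeleton

variable (k : Skeleton)

theorem isStrand_space_iff {s : ℕ} : k.space.IsStrand s ↔ s < k.I.length := by
  simp [SSpaceT.IsStrand, Skeleton.space]

theorem trace_space {s : ℕ} (hs : s < k.I.length) :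
    k.space.trace s = (k.I[s].tp.item.C.take k.I[s].height).map (EvtT.subst k.soX k.I[s].σ) := by
  simp [SSpaceT.trace, Skeleton.space, hs]

theorem length_trace_space {s : ℕ} (hs : s < k.I.length) :
    (k.space.trace s).length = k.I[s].height := by
  rw [k.trace_space hs, List.length_map, List.length_take]
  exact min_eq_left (k.hpos _ (List.getElem_mem hs)).2

theorem evt_space {s i : ℕ} (hs : s < k.I.length) (hi : i < k.I[s].height) :
    k.space.evt (s, i) = (k.I[s].tp.item.subst k.soX k.I[s].σ).C.getD i dEvt := by
  rw [SSpaceT.evt, k.trace_space hs, RoleItemT.getD_subst_C, ← EvtT.subst_dEvt k.soX k.I[s].σ,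
    List.getD_map, List.getD_eq_getElem?_getD, List.getD_eq_getElem?_getD,
    List.getElem?_take_of_lt hi, EvtT.subst_dEvt]

end Skeleton

namespace SatSkel

variable {Υ : Bundle} {k : Skeleton} {αz : ℕ → ℕ} {αx : ℕ → Msg}

theorem htin (hsat : SatSkel Υ k αz αx) {s : ℕ} (hs : s < k.I.length) :
    Htin Υ.Θ (αz s) k.I[s].height ((k.I[s].tp.item.subst k.soX k.I[s].σ).subst gSo αx) :=
  hsat.1 s hs

theorem isStrand (hsat : SatSkel Υ k αz αx) {s : ℕ} (hs : k.space.IsStrand s) :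
    Υ.Θ.IsStrand (αz s) :=
  (hsat.htin (k.isStrand_space_iff.mp hs)).2.1

theorem isNode (hsat : SatSkel Υ k αz αx) {n : ℕ × ℕ} (hn : k.space.IsNode n) :
    Υ.Θ.IsNode (αz n.1, n.2) := by
  obtain ⟨hs, hi⟩ := hn
  have hs' := k.isStrand_space_iff.mp hs
  rw [k.length_trace_space hs'] at hi
  exact ⟨hsat.isStrand hs, hi.trans_le (hsat.htin hs').1⟩

theorem subst_evt (hsat : SatSkel Υ k αz αx) {n : ℕ × ℕ} (hn : k.space.IsNode n) :
    (k.space.evt n).subst gSo αx = Υ.Θ.evt (αz n.1, n.2) := by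
  obtain ⟨hs, hi⟩ := hn
  have hs' := k.isStrand_space_iff.mp hs
  rw [k.length_trace_space hs'] at hi
  obtain ⟨hheight, hinst⟩ := hsat.htin hs'
  rw [k.evt_space hs' hi, ← RoleItemT.getD_subst_C, hinst.evt_eq (hi.trans_le hheight)]

end SatSkel

/-- If the bundle `Υ` is a run of the protocol of the skeleton `k` and the
assignment `α = (αz, αx)` satisfies the skeleton formula `Φ` of
`K_Υ(k) = (Y, Φ)` in the interpretation `I(Υ)`, then `(φ, σ)` defined by
`φ(s) = α(z_s)` and `σ(x) = α(x)` is a homomorphism from `k` into `Υ`. -/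
theorem satisfaction_gives_hom (k : Skeleton) (Υ : Bundle)
    (αz : ℕ → ℕ) (αx : ℕ → Msg)
    (hrun : RunOf Υ (GroundProt k.P))
    (hok : AssignOK Υ k αz αx)
    (hsat : SatSkel Υ k αz αx) :
    ∃ δ : BHom k Υ, δ.φ = αz ∧ δ.σ = αx :=
  ⟨{ φ := αz, σ := αx, resp := hok.2,
     strands := fun _ => hsat.isStrand, node_map := fun _ => hsat.isNode,
     evt_map := fun _ => hsat.subst_evt, ord := hsat.2.1, non := hsat.2.2.1,
     uniq := hsat.2.2.2, run := hrun }, rfl, rfl⟩
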